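/- Let (G,χ) be a coloured graph that is g_1-sparse, i.e., |F| ≤ (|V(F)| - ω(F)) + min{k(F), |V(F)| - 2} for every nonempty F ⊆ E. Then for each colour c, if there exists a (c,1)-tight edge set (a nonempty F ⊆ E with |F| = (|V(F)| - ω(F)) + k(F) and c appearing among the colours of V(F)), there is a unique inclusionwise minimal (c,1)-tight set. -/

import Mathlib

open Finset

attribute [local instance] Classical.propDecidable

noncomputable section

variable {V C : Type*}

/-- The set of vertices spanned by an edge set. -/
def eVerts [Fintype V] [DecidableEq V] (F : Finset (Sym2 V)) : Finset V :=
  Finset.univ.filter fun v => ∃ e ∈ F, v ∈ e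

/-- The set of colours appearing on the vertices spanned by an edge set. -/
def eCols [Fintype V] [DecidableEq V] [DecidableEq C] (χ : V → Option C)
    (F : Finset (Sym2 V)) : Finset C :=
  (eVerts F).biUnion fun v => (χ v).toFinset

/-- The number of colours appearing on the vertices spanned by an edge set. -/
def kCount [Fintype V] [DecidableEq V] [DecidableEq C] (χ : V → Option C)
    (F : Finset (Sym2 V)) : ℤ :=
  (eCols χ F).card

/-- The set of all colours used by the colouring. -/
def usedCols [Fintype V] [DecidableEq C] (χ : V → Option C) : Finset C :=
  Finset.univ.biUnion fun v => (χ v).toFinset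

/-- The number of connected components of the graph `(V(F), F)`. -/
def omegaCount [Fintype V] [DecidableEq V] (F : Finset (Sym2 V)) : ℤ :=
  ((eVerts F).image fun v =>
    (eVerts F).filter fun u =>
      (SimpleGraph.fromEdgeSet (↑F : Set (Sym2 V))).Reachable v u).card

/-- The function `h_d(F) = min{k(F), |V(F)| - (d+1)}`. -/
def hFun [Fintype V] [DecidableEq V] [DecidableEq C] (χ : V → Option C) (d : ℕ)
    (F : Finset (Sym2 V)) : ℤ :=
  min (kCount χ F) (((eVerts F).card : ℤ) - (d + 1))

/-- A vertex is colour-isolated if it is coloured and no other vertex has its colour. -/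
def ColourIsolated (χ : V → Option C) (v : V) : Prop :=
  ∃ c, χ v = some c ∧ ∀ u, u ≠ v → χ u ≠ some c

/-- `F` is `(c,1)`-tight: nonempty, inside `E`, `|F| = (|V(F)| - ω(F)) + k(F)`,
and colour `c` appears on `V(F)`. -/
def CTight1 {V C : Type*} [Fintype V] [DecidableEq V] [DecidableEq C]
    (χ : V → Option C) (E : Finset (Sym2 V)) (c : C) (F : Finset (Sym2 V)) : Prop :=
  F.Nonempty ∧ F ⊆ E ∧
    (F.card : ℤ) = (((eVerts F).card : ℤ) - omegaCount F) + kCount χ F ∧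
    c ∈ eCols χ F

/-! The quantity `|V(F)| - ω(F)` is the dimension of the span of the vectors `e_u - e_v`,
`uv ∈ F`: by rank–nullity, since the functions annihilated by the oriented incidence matrix are
those constant on the components of `(V, F)`, and the vertices outside `V(F)` are isolated.
So it is submodular in `F`; so is `k`, with defect `|cols F₁ ∩ cols F₂| - k(F₁ ∩ F₂)`.
For two `(c,1)`-tight sets, sparsity of their union and intersection forces equality in both
submodular inequalities. Hence the intersection carries every common colour, in particular `c`,
and is again `(c,1)`-tight. A nonempty family of finite sets closed under intersection has a
unique minimal member. -/

open Module Matrix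

namespace SimpleGraph

section EdgeSpan
variable [DecidableEq V]

def edgeSpan (H : SimpleGraph V) : Submodule ℝ (V → ℝ) :=
  Submodule.span ℝ {x | ∃ u v, H.Adj u v ∧ Pi.single u 1 - Pi.single v 1 = x}

theorem edgeSpan_mono {H H' : SimpleGraph V} (h : H ≤ H') : H.edgeSpan ≤ H'.edgeSpan :=
  Submodule.span_mono fun _ ⟨u, v, huv, hx⟩ => ⟨u, v, h huv, hx⟩

theorem edgeSpan_sup (H H' : SimpleGraph V) : (H ⊔ H').edgeSpan = H.edgeSpan ⊔ H'.edgeSpan := by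
  rw [edgeSpan, edgeSpan, edgeSpan, ← Submodule.span_union]
  congr 1
  ext x
  simp only [sup_adj, Set.mem_ofPred_eq, Set.mem_union]
  grind

theorem finrank_edgeSpan_sup_add_finrank_edgeSpan_inf_le [Fintype V] (H H' : SimpleGraph V) :
    finrank ℝ (H ⊔ H').edgeSpan + finrank ℝ (H ⊓ H').edgeSpan ≤
      finrank ℝ H.edgeSpan + finrank ℝ H'.edgeSpan := by
  rw [edgeSpan_sup, ← Submodule.finrank_sup_add_finrank_inf_eq H.edgeSpan H'.edgeSpan]
  have h : (H ⊓ H').edgeSpan ≤ H.edgeSpan ⊓ H'.edgeSpan :=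
    le_inf (edgeSpan_mono inf_le_left) (edgeSpan_mono inf_le_right)
  exact Nat.add_le_add_left (Submodule.finrank_mono h) _

variable (H : SimpleGraph V)

def orientedIncMatrix : Matrix H.Dart V ℝ :=
  Matrix.of fun d => Pi.single d.fst 1 - Pi.single d.snd 1

theorem edgeSpan_eq_span_row_orientedIncMatrix :
    H.edgeSpan = Submodule.span ℝ (Set.range H.orientedIncMatrix.row) := by
  refine congrArg (Submodule.span ℝ) (Set.ext fun x => ?_)
  constructor
  · rintro ⟨u, v, huv, rfl⟩
    exact ⟨⟨(u, v), huv⟩, rfl⟩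
  · rintro ⟨d, rfl⟩
    exact ⟨d.fst, d.snd, d.adj, rfl⟩

theorem orientedIncMatrix_mulVec_apply [Fintype V] (x : V → ℝ) (d : H.Dart) :
    (H.orientedIncMatrix *ᵥ x) d = x d.fst - x d.snd := by
  simp [orientedIncMatrix, Matrix.mulVec, dotProduct, sub_mul, sum_sub_distrib,
    Pi.single_apply]

theorem ker_mulVecLin_orientedIncMatrix [Fintype V] [DecidableRel H.Adj] :
    LinearMap.ker H.orientedIncMatrix.mulVecLin = LinearMap.ker (H.lapMatrix ℝ).toLin' := by
  ext x
  rw [LinearMap.mem_ker, LinearMap.mem_ker, Matrix.mulVecLin_apply, Matrix.toLin'_apply,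
    lapMatrix_mulVec_eq_zero_iff_forall_adj, funext_iff]
  simp only [orientedIncMatrix_mulVec_apply, Pi.zero_apply, sub_eq_zero]
  exact ⟨fun h u v huv => h ⟨(u, v), huv⟩, fun h d => h _ _ d.adj⟩

theorem finrank_edgeSpan_add_card_connectedComponent [Fintype V] [DecidableRel H.Adj] :
    finrank ℝ H.edgeSpan + Fintype.card H.ConnectedComponent = Fintype.card V := by
  rw [edgeSpan_eq_span_row_orientedIncMatrix, ← Matrix.rank_eq_finrank_span_row, Matrix.rank,
    card_connectedComponent_eq_finrank_ker_toLin'_lapMatrix, ← ker_mulVecLin_orientedIncMatrix,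
    LinearMap.finrank_range_add_finrank_ker, Module.finrank_fintype_fun_eq_card]

end EdgeSpan

end SimpleGraph

open SimpleGraph

section Components
variable [Fintype V] [DecidableEq V] {F : Finset (Sym2 V)}

theorem mem_eVerts {v : V} : v ∈ eVerts F ↔ ∃ e ∈ F, v ∈ e := by
  simp [eVerts]

theorem eq_of_reachable_of_notMem_eVerts {v w : V} (hv : v ∉ eVerts F)
    (h : (fromEdgeSet (F : Set (Sym2 V))).Reachable v w) : v = w := by
  obtain ⟨p⟩ := h
  cases p with
  | nil => rfl
  | cons hadj _ =>
    exact absurd (mem_eVerts.2 ⟨_, ((fromEdgeSet_adj _).1 hadj).1, Sym2.mem_mk_left _ _⟩) hv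

theorem omegaCount_eq_card_image_connectedComponentMk :
    omegaCount F =
      ((eVerts F).image (fromEdgeSet (F : Set (Sym2 V))).connectedComponentMk).card := by
  set H := fromEdgeSet (F : Set (Sym2 V))
  let g : H.ConnectedComponent → Finset V :=
    fun C => (eVerts F).filter (H.connectedComponentMk · = C)
  have hg : ∀ v, (eVerts F).filter (H.Reachable v) = g (H.connectedComponentMk v) := by
    intro v
    ext u
    simp only [g, mem_filter, ConnectedComponent.eq, reachable_comm]
  have hinj : Set.InjOn g ((eVerts F).image H.connectedComponentMk) := by
    rintro _ hC C' - hgC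
    obtain ⟨v, hv, rfl⟩ := mem_image.1 hC
    have hvC : v ∈ g (H.connectedComponentMk v) := mem_filter.2 ⟨hv, rfl⟩
    rw [hgC] at hvC
    exact (mem_filter.1 hvC).2
  rw [omegaCount, image_congr (fun v _ => hg v), ← Function.comp_def g, ← image_image,
    card_image_of_injOn hinj]

theorem card_connectedComponent_fromEdgeSet :
    (Fintype.card (fromEdgeSet (F : Set (Sym2 V))).ConnectedComponent : ℤ) =
      omegaCount F + (eVerts F)ᶜ.card := by
  set H := fromEdgeSet (F : Set (Sym2 V))
  have hdisj : Disjoint ((eVerts F).image H.connectedComponentMk)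
      ((eVerts F)ᶜ.image H.connectedComponentMk) := by
    rw [disjoint_iff_ne]
    rintro _ hC _ hC' rfl
    obtain ⟨v, hv, hvC⟩ := mem_image.1 hC
    obtain ⟨w, hw, rfl⟩ := mem_image.1 hC'
    have := eq_of_reachable_of_notMem_eVerts (mem_compl.1 hw) (ConnectedComponent.exact hvC).symm
    exact mem_compl.1 hw (this ▸ hv)
  have hinj : Set.InjOn H.connectedComponentMk ↑((eVerts F)ᶜ) := fun v hv w _ h =>
    eq_of_reachable_of_notMem_eVerts (mem_compl.1 hv) (ConnectedComponent.exact h)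
  rw [← card_univ, ← image_univ_of_surjective (f := H.connectedComponentMk) Quot.mk_surjective,
    ← union_compl (eVerts F), image_union, card_union_of_disjoint hdisj,
    card_image_of_injOn hinj, omegaCount_eq_card_image_connectedComponentMk]
  push_cast
  congr

theorem card_eVerts_sub_omegaCount (F : Finset (Sym2 V)) :
    ((eVerts F).card : ℤ) - omegaCount F = finrank ℝ (fromEdgeSet (F : Set (Sym2 V))).edgeSpan := by
  have hrank := finrank_edgeSpan_add_card_connectedComponent (fromEdgeSet (F : Set (Sym2 V)))
  have hcomp := card_connectedComponent_fromEdgeSet (F := F)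
  have hcompl := card_add_card_compl (eVerts F)
  omega

end Components

section Tight
variable [Fintype V] [DecidableEq V] [DecidableEq C] {χ : V → Option C}
  {F F₁ F₂ : Finset (Sym2 V)}

theorem eVerts_union (F₁ F₂ : Finset (Sym2 V)) : eVerts (F₁ ∪ F₂) = eVerts F₁ ∪ eVerts F₂ := by
  ext v
  simp only [mem_eVerts, mem_union, or_and_right, exists_or]

theorem eCols_union (χ : V → Option C) (F₁ F₂ : Finset (Sym2 V)) :
    eCols χ (F₁ ∪ F₂) = eCols χ F₁ ∪ eCols χ F₂ := by
  rw [eCols, eVerts_union, union_biUnion]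
  rfl

theorem eCols_mono (χ : V → Option C) (h : F₁ ⊆ F₂) : eCols χ F₁ ⊆ eCols χ F₂ :=
  biUnion_subset_biUnion_of_subset_left _ fun _ hv =>
    let ⟨e, he, hve⟩ := mem_eVerts.1 hv
    mem_eVerts.2 ⟨e, h he, hve⟩

theorem nonempty_of_mem_eCols {c : C} (hc : c ∈ eCols χ F) : F.Nonempty := by
  obtain ⟨v, hv, -⟩ := mem_biUnion.1 hc
  obtain ⟨e, he, -⟩ := mem_eVerts.1 hv
  exact ⟨e, he⟩

theorem kCount_union_add_card_inter (χ : V → Option C) (F₁ F₂ : Finset (Sym2 V)) :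
    kCount χ (F₁ ∪ F₂) + (eCols χ F₁ ∩ eCols χ F₂).card = kCount χ F₁ + kCount χ F₂ := by
  rw [kCount, kCount, kCount, eCols_union]
  exact_mod_cast card_union_add_card_inter _ _

theorem rank_union_add_rank_inter_le (F₁ F₂ : Finset (Sym2 V)) :
    ((eVerts (F₁ ∪ F₂)).card - omegaCount (F₁ ∪ F₂)) +
        ((eVerts (F₁ ∩ F₂)).card - omegaCount (F₁ ∩ F₂)) ≤
      ((eVerts F₁).card - omegaCount F₁) + ((eVerts F₂).card - omegaCount F₂) := by
  rw [card_eVerts_sub_omegaCount, card_eVerts_sub_omegaCount, card_eVerts_sub_omegaCount,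
    card_eVerts_sub_omegaCount, coe_union, coe_inter, fromEdgeSet_union,
    fromEdgeSet_inter]
  exact_mod_cast finrank_edgeSpan_sup_add_finrank_edgeSpan_inf_le _ _

theorem card_le_rank_add_kCount_of_sparse {E : Finset (Sym2 V)}
    (hsparse : ∀ F ⊆ E, F.Nonempty →
      (F.card : ℤ) ≤ (((eVerts F).card : ℤ) - omegaCount F) + kCount χ F)
    (hF : F ⊆ E) : (F.card : ℤ) ≤ (((eVerts F).card : ℤ) - omegaCount F) + kCount χ F := by
  obtain rfl | hne := F.eq_empty_or_nonempty
  · simp [eVerts, omegaCount, kCount, eCols]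
  · exact hsparse F hF hne

theorem CTight1.inter {E : Finset (Sym2 V)} {c : C}
    (hsparse : ∀ F ⊆ E, F.Nonempty →
      (F.card : ℤ) ≤ (((eVerts F).card : ℤ) - omegaCount F) + kCount χ F)
    (h₁ : CTight1 χ E c F₁) (h₂ : CTight1 χ E c F₂) : CTight1 χ E c (F₁ ∩ F₂) := by
  obtain ⟨-, hE₁, hcard₁, hc₁⟩ := h₁
  obtain ⟨-, hE₂, hcard₂, hc₂⟩ := h₂
  have hEi : F₁ ∩ F₂ ⊆ E := inter_subset_left.trans hE₁
  have hsub : eCols χ (F₁ ∩ F₂) ⊆ eCols χ F₁ ∩ eCols χ F₂ :=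
    subset_inter (eCols_mono χ inter_subset_left)
      (eCols_mono χ inter_subset_right)
  have hunion := card_le_rank_add_kCount_of_sparse hsparse (union_subset hE₁ hE₂)
  have hinter := card_le_rank_add_kCount_of_sparse hsparse hEi
  have hrank := rank_union_add_rank_inter_le F₁ F₂
  have hk := kCount_union_add_card_inter χ F₁ F₂
  have hcard : ((F₁ ∪ F₂).card : ℤ) + (F₁ ∩ F₂).card = F₁.card + F₂.card := by
    exact_mod_cast card_union_add_card_inter F₁ F₂
  have hle : ((eCols χ (F₁ ∩ F₂)).card : ℤ) ≤ (eCols χ F₁ ∩ eCols χ F₂).card := by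
    exact_mod_cast card_le_card hsub
  have hcols : eCols χ (F₁ ∩ F₂) = eCols χ F₁ ∩ eCols χ F₂ := by
    refine eq_of_subset_of_card_le hsub ?_
    rw [kCount] at hinter hunion hk
    omega
  have hc : c ∈ eCols χ (F₁ ∩ F₂) := hcols ▸ mem_inter.2 ⟨hc₁, hc₂⟩
  refine ⟨nonempty_of_mem_eCols hc, hEi, ?_, hc⟩
  rw [kCount, hcols] at hinter ⊢
  omega

end Tight

theorem Finset.existsUnique_minimal_of_inter_mem {α : Type*} [DecidableEq α] {P : Finset α → Prop}
    (hP : ∀ A B, P A → P B → P (A ∩ B)) (hex : ∃ A, P A) :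
    ∃! A, P A ∧ ∀ B, P B → B ⊆ A → B = A := by
  obtain ⟨A, hA⟩ := exists_minimal_of_wellFoundedLT P hex
  refine ⟨A, ⟨hA.prop, fun B hB hBA => hA.eq_of_le hB hBA⟩, fun B ⟨hB, hBmin⟩ => ?_⟩
  rw [← hBmin _ (hP B A hB hA.prop) inter_subset_left,
    hA.eq_of_le (hP B A hB hA.prop) inter_subset_right]

theorem g1_sparse_unique_minimal_tight_general {V C : Type*} [Fintype V] [DecidableEq V] [DecidableEq C]
    (χ : V → Option C)
    (E : Finset (Sym2 V))
    (hsparse : ∀ F ⊆ E, F.Nonempty →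
      (F.card : ℤ) ≤ (((eVerts F).card : ℤ) - omegaCount F)
        + min (kCount χ F) (((eVerts F).card : ℤ) - 2))
    (c : C) (hex : ∃ F, CTight1 χ E c F) :
    ∃! F, CTight1 χ E c F ∧ ∀ F', CTight1 χ E c F' → F' ⊆ F → F' = F := by
  have hsparse' : ∀ F ⊆ E, F.Nonempty →
      (F.card : ℤ) ≤ (((eVerts F).card : ℤ) - omegaCount F) + kCount χ F := fun F hF hne =>
    (hsparse F hF hne).trans (add_le_add_right (min_le_left _ _) _)
  exact Finset.existsUnique_minimal_of_inter_mem (fun _ _ h₁ h₂ => h₁.inter hsparse' h₂) hex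

/-- in a `g₁`-sparse coloured graph, for each colour `c`, if a `(c,1)`-tight
set exists then there is a unique inclusionwise minimal `(c,1)`-tight set. -/
theorem g1_sparse_unique_minimal_tight {V C : Type*} [Fintype V] [DecidableEq V] [DecidableEq C]
    (G : SimpleGraph V) (χ : V → Option C)
    (E : Finset (Sym2 V)) (hE : ∀ e, e ∈ E ↔ e ∈ G.edgeSet)
    (hsparse : ∀ F ⊆ E, F.Nonempty →
      (F.card : ℤ) ≤ (((eVerts F).card : ℤ) - omegaCount F)
        + min (kCount χ F) (((eVerts F).card : ℤ) - 2))
    (c : C) (hex : ∃ F, CTight1 χ E c F) :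
    ∃! F, CTight1 χ E c F ∧ ∀ F', CTight1 χ E c F' → F' ⊆ F → F' = F :=
  g1_sparse_unique_minimal_tight_general χ E hsparse c hex
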